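/- arXiv:1401.2935 — 4 statements merged into one kernel-verified Lean document; each statement's English description precedes it below -/
import Mathlib

section
/- The function G_I(τ) := α_d^{−1} ∫_{|z|<1} e^{−z·τ} dz on ℝ^d satisfies: G_I(0) = 1; G_I(τ) ≥ 1 for all τ; G_I(τ₁) < G_I(τ₂) whenever |τ₁| < |τ₂| (G_I is radial and strictly increasing in |τ|); and for every r > 0, inf_{|τ| ≥ r} G_I(τ) > 1. -/
open MeasureTheory

noncomputable section

/-- The Lebesgue volume `α_d` of the unit ball of `ℝ^d`. -/
def unitBallVol (d : ℕ) : ℝ :=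
  (volume (Metric.ball (0 : EuclideanSpace ℝ (Fin d)) 1)).toReal

/-- `G_I(τ) := α_d⁻¹ ∫_{|z|<1} e^{-z·τ} dz`, the analytic continuation `G(iτ)`. -/
def GI (d : ℕ) (τ : EuclideanSpace ℝ (Fin d)) : ℝ :=
  (unitBallVol d)⁻¹ *
    ∫ z in Metric.ball (0 : EuclideanSpace ℝ (Fin d)) 1, Real.exp (-(inner ℝ z τ : ℝ))

namespace GIAux

variable {d : ℕ}

lemma unitBallVol_pos (d : ℕ) : 0 < unitBallVol d :=
  ENNReal.toReal_pos (Metric.measure_ball_pos _ _ one_pos).ne' measure_ball_lt_top.ne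

lemma cont_exp (τ : EuclideanSpace ℝ (Fin d)) :
    Continuous fun z : EuclideanSpace ℝ (Fin d) => Real.exp (-(inner ℝ z τ : ℝ)) :=
  Real.continuous_exp.comp ((continuous_id.inner continuous_const).neg)

lemma integrableOn_of_continuous {f : EuclideanSpace ℝ (Fin d) → ℝ} (hf : Continuous f) :
    IntegrableOn f (Metric.ball (0 : EuclideanSpace ℝ (Fin d)) 1) volume :=
  (hf.locallyIntegrable.integrableOn_isCompact (isCompact_closedBall _ _)).mono_set
    Metric.ball_subset_closedBall

lemma integrableOn_exp (τ : EuclideanSpace ℝ (Fin d)) :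
    IntegrableOn (fun z : EuclideanSpace ℝ (Fin d) => Real.exp (-(inner ℝ z τ : ℝ)))
      (Metric.ball 0 1) volume :=
  integrableOn_of_continuous (cont_exp τ)

lemma integrableOn_cosh (τ : EuclideanSpace ℝ (Fin d)) :
    IntegrableOn (fun z : EuclideanSpace ℝ (Fin d) => Real.cosh (inner ℝ z τ : ℝ))
      (Metric.ball 0 1) volume :=
  integrableOn_of_continuous
    (Real.continuous_cosh.comp (continuous_id.inner continuous_const))

/-- Change of variable by a linear isometry. -/
lemma GI_comp_isometry
    (e : EuclideanSpace ℝ (Fin d) ≃ₗᵢ[ℝ] EuclideanSpace ℝ (Fin d))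
    (τ : EuclideanSpace ℝ (Fin d)) : GI d (e τ) = GI d τ := by
  unfold GI
  congr 1
  have hmp : MeasurePreserving e volume volume := e.measurePreserving
  have hemb : MeasurableEmbedding e := e.toHomeomorph.measurableEmbedding
  have hball : Metric.ball (0 : EuclideanSpace ℝ (Fin d)) 1 =
      e ⁻¹' Metric.ball (0 : EuclideanSpace ℝ (Fin d)) 1 := by
    ext z
    simp [Metric.mem_ball, dist_zero_right, e.norm_map]
  calc ∫ z in Metric.ball (0 : EuclideanSpace ℝ (Fin d)) 1, Real.exp (-(inner ℝ z (e τ) : ℝ))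
      = ∫ z in e ⁻¹' Metric.ball (0 : EuclideanSpace ℝ (Fin d)) 1,
          Real.exp (-(inner ℝ (e z) (e τ) : ℝ)) := by
        rw [hmp.setIntegral_preimage_emb hemb
          (fun y => Real.exp (-(inner ℝ y (e τ) : ℝ))) _, hball]
    _ = ∫ z in Metric.ball (0 : EuclideanSpace ℝ (Fin d)) 1, Real.exp (-(inner ℝ z τ : ℝ)) := by
        rw [← hball]
        refine setIntegral_congr_fun measurableSet_ball fun z _ => ?_
        rw [e.inner_map_map]

lemma GI_radial {τ₁ τ₂ : EuclideanSpace ℝ (Fin d)} (h : ‖τ₁‖ = ‖τ₂‖) :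
    GI d τ₁ = GI d τ₂ := by
  have := GI_comp_isometry (Submodule.reflection (ℝ ∙ (τ₁ - τ₂))ᗮ) τ₁
  rw [Submodule.reflection_sub h] at this
  exact this.symm

/-- Integral of `exp(-⟪z,τ⟫)` equals integral of `exp(⟪z,τ⟫)` by symmetry `z ↦ -z`. -/
lemma integral_exp_neg_eq (τ : EuclideanSpace ℝ (Fin d)) :
    ∫ z in Metric.ball (0 : EuclideanSpace ℝ (Fin d)) 1, Real.exp (-(inner ℝ z τ : ℝ)) =
    ∫ z in Metric.ball (0 : EuclideanSpace ℝ (Fin d)) 1, Real.exp ((inner ℝ z τ : ℝ)) := by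
  have hmp : MeasurePreserving (fun z : EuclideanSpace ℝ (Fin d) => -z) volume volume :=
    Measure.measurePreserving_neg volume
  have hemb : MeasurableEmbedding (fun z : EuclideanSpace ℝ (Fin d) => -z) :=
    (MeasurableEquiv.neg (EuclideanSpace ℝ (Fin d))).measurableEmbedding
  have hball : Metric.ball (0 : EuclideanSpace ℝ (Fin d)) 1 =
      (fun z : EuclideanSpace ℝ (Fin d) => -z) ⁻¹' Metric.ball (0 : EuclideanSpace ℝ (Fin d)) 1 := by
    ext z
    simp [Metric.mem_ball, dist_zero_right]
  calc ∫ z in Metric.ball (0 : EuclideanSpace ℝ (Fin d)) 1, Real.exp (-(inner ℝ z τ : ℝ))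
      = ∫ z in (fun z : EuclideanSpace ℝ (Fin d) => -z) ⁻¹' Metric.ball (0 : EuclideanSpace ℝ (Fin d)) 1,
          Real.exp ((inner ℝ (-z) τ : ℝ)) := by
        rw [← hball]
        refine setIntegral_congr_fun measurableSet_ball fun z _ => ?_
        rw [inner_neg_left]
    _ = ∫ z in Metric.ball (0 : EuclideanSpace ℝ (Fin d)) 1, Real.exp ((inner ℝ z τ : ℝ)) :=
        hmp.setIntegral_preimage_emb hemb (fun y => Real.exp ((inner ℝ y τ : ℝ))) _

lemma GI_eq_cosh (τ : EuclideanSpace ℝ (Fin d)) :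
    GI d τ = (unitBallVol d)⁻¹ *
      ∫ z in Metric.ball (0 : EuclideanSpace ℝ (Fin d)) 1, Real.cosh (inner ℝ z τ : ℝ) := by
  unfold GI
  congr 1
  have h1 := integrableOn_exp τ
  have h2 := integrableOn_exp (-τ)
  have h2' : IntegrableOn (fun z : EuclideanSpace ℝ (Fin d) => Real.exp ((inner ℝ z τ : ℝ)))
      (Metric.ball 0 1) volume := by
    simpa [inner_neg_right] using h2
  have hcosh : ∀ z : EuclideanSpace ℝ (Fin d),
      Real.cosh (inner ℝ z τ : ℝ) =
        (Real.exp ((inner ℝ z τ : ℝ)) + Real.exp (-(inner ℝ z τ : ℝ))) / 2 := fun z =>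
    Real.cosh_eq _
  calc ∫ z in Metric.ball (0 : EuclideanSpace ℝ (Fin d)) 1, Real.exp (-(inner ℝ z τ : ℝ))
      = ((∫ z in Metric.ball (0 : EuclideanSpace ℝ (Fin d)) 1, Real.exp ((inner ℝ z τ : ℝ))) +
         (∫ z in Metric.ball (0 : EuclideanSpace ℝ (Fin d)) 1, Real.exp (-(inner ℝ z τ : ℝ)))) / 2 := by
        rw [← integral_exp_neg_eq τ]; ring
    _ = ∫ z in Metric.ball (0 : EuclideanSpace ℝ (Fin d)) 1, Real.cosh (inner ℝ z τ : ℝ) := by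
        rw [← integral_add h2' h1]
        rw [← integral_div]
        exact (setIntegral_congr_fun measurableSet_ball fun z _ => hcosh z).symm

lemma GI_zero : GI d 0 = 1 := by
  unfold GI
  have : ∀ z : EuclideanSpace ℝ (Fin d), Real.exp (-(inner ℝ z (0 : EuclideanSpace ℝ (Fin d)) : ℝ)) = 1 := by
    intro z; simp
  rw [setIntegral_congr_fun measurableSet_ball fun z _ => this z]
  simp only [setIntegral_const, smul_eq_mul, mul_one]
  exact inv_mul_cancel₀ (unitBallVol_pos d).ne'

/-- Strict monotonicity along a ray through a fixed unit vector. -/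
lemma GI_smul_lt (hd : 1 ≤ d) {e : EuclideanSpace ℝ (Fin d)} (he : ‖e‖ = 1)
    {a b : ℝ} (ha : 0 ≤ a) (hab : a < b) : GI d (a • e) < GI d (b • e) := by
  rw [GI_eq_cosh, GI_eq_cosh]
  have hα := unitBallVol_pos d
  apply mul_lt_mul_of_pos_left _ (inv_pos.2 hα)
  have hinner : ∀ (c : ℝ) (z : EuclideanSpace ℝ (Fin d)),
      (inner ℝ z (c • e) : ℝ) = c * (inner ℝ z e : ℝ) := fun c z => real_inner_smul_right z e c
  set f : EuclideanSpace ℝ (Fin d) → ℝ :=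
    fun z => Real.cosh ((inner ℝ z (b • e) : ℝ)) - Real.cosh ((inner ℝ z (a • e) : ℝ)) with hf
  have hfint : IntegrableOn f (Metric.ball (0 : EuclideanSpace ℝ (Fin d)) 1) volume :=
    (integrableOn_cosh (b • e)).sub (integrableOn_cosh (a • e))
  have hfnonneg : ∀ z, 0 ≤ f z := by
    intro z
    simp only [hf, sub_nonneg, hinner]
    rw [Real.cosh_le_cosh, abs_mul, abs_mul]
    gcongr
  have hfpos : ∀ z, (inner ℝ z e : ℝ) ≠ 0 → 0 < f z := by
    intro z hz
    simp only [hf, sub_pos, hinner]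
    rw [Real.cosh_lt_cosh, abs_mul, abs_mul]
    have : 0 < |(inner ℝ z e : ℝ)| := abs_pos.2 hz
    apply mul_lt_mul_of_pos_right _ this
    rw [abs_of_nonneg ha, abs_of_nonneg (ha.trans hab.le)]
    exact hab
  have key : 0 < ∫ z in Metric.ball (0 : EuclideanSpace ℝ (Fin d)) 1, f z := by
    rw [setIntegral_pos_iff_support_of_nonneg_ae
      (Filter.Eventually.of_forall hfnonneg) hfint]
    -- the hyperplane ⟪·, e⟫ = 0 has measure zero
    have hK : volume (((ℝ ∙ e)ᗮ : Submodule ℝ (EuclideanSpace ℝ (Fin d))) :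
        Set (EuclideanSpace ℝ (Fin d))) = 0 := by
      apply Measure.addHaar_submodule
      intro htop
      have he' : e ∈ (ℝ ∙ e)ᗮ := htop ▸ Submodule.mem_top
      have := Submodule.inner_right_of_mem_orthogonal (Submodule.mem_span_singleton_self e) he'
      rw [real_inner_self_eq_norm_sq, he] at this
      norm_num at this
    have hsub : Metric.ball (0 : EuclideanSpace ℝ (Fin d)) 1 \
        (((ℝ ∙ e)ᗮ : Submodule ℝ (EuclideanSpace ℝ (Fin d))) :
          Set (EuclideanSpace ℝ (Fin d))) ⊆
        Function.support f ∩ Metric.ball 0 1 := by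
      rintro z ⟨hzball, hzK⟩
      refine ⟨fun h0 => hzK ?_, hzball⟩
      by_contra hz
      have hzinner : (inner ℝ z e : ℝ) ≠ 0 := by
        intro hzi
        apply hz
        rw [SetLike.mem_coe, Submodule.mem_orthogonal_singleton_iff_inner_left]
        exact hzi
      exact (hfpos z hzinner).ne' h0
    calc (0 : ENNReal) < volume (Metric.ball (0 : EuclideanSpace ℝ (Fin d)) 1) :=
          Metric.measure_ball_pos _ _ one_pos
      _ = volume (Metric.ball (0 : EuclideanSpace ℝ (Fin d)) 1 \
            (((ℝ ∙ e)ᗮ : Submodule ℝ (EuclideanSpace ℝ (Fin d))) :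
              Set (EuclideanSpace ℝ (Fin d)))) := (measure_diff_null hK).symm
      _ ≤ volume (Function.support f ∩ Metric.ball (0 : EuclideanSpace ℝ (Fin d)) 1) :=
          measure_mono hsub
  have := integral_sub (integrableOn_cosh (b • e)) (integrableOn_cosh (a • e))
  rw [hf] at key
  rw [this] at key
  linarith

end GIAux

/-- `G_I(0) = 1`, `G_I ≥ 1`, `G_I` is radial and strictly increasing in
`|τ|`, and `inf_{|τ| ≥ r} G_I > 1` for every `r > 0`. -/
theorem GI_properties (d : ℕ) (hd : 1 ≤ d) :
    GI d 0 = 1 ∧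
    (∀ τ : EuclideanSpace ℝ (Fin d), 1 ≤ GI d τ) ∧
    (∀ τ₁ τ₂ : EuclideanSpace ℝ (Fin d), ‖τ₁‖ = ‖τ₂‖ → GI d τ₁ = GI d τ₂) ∧
    (∀ τ₁ τ₂ : EuclideanSpace ℝ (Fin d), ‖τ₁‖ < ‖τ₂‖ → GI d τ₁ < GI d τ₂) ∧
    (∀ r > 0, ∃ m > 1, ∀ τ : EuclideanSpace ℝ (Fin d), r ≤ ‖τ‖ → m ≤ GI d τ) := by
  classical
  set e : EuclideanSpace ℝ (Fin d) := EuclideanSpace.single (⟨0, hd⟩ : Fin d) 1 with he_def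
  have he : ‖e‖ = 1 := by
    rw [he_def, EuclideanSpace.norm_single]; norm_num
  have hnorm_smul : ∀ c : ℝ, 0 ≤ c → ‖c • e‖ = c := by
    intro c hc
    rw [norm_smul, he, mul_one, Real.norm_eq_abs, abs_of_nonneg hc]
  have hstrict : ∀ τ₁ τ₂ : EuclideanSpace ℝ (Fin d), ‖τ₁‖ < ‖τ₂‖ → GI d τ₁ < GI d τ₂ := by
    intro τ₁ τ₂ h
    have h1 : GI d τ₁ = GI d (‖τ₁‖ • e) :=
      GIAux.GI_radial (by rw [hnorm_smul _ (norm_nonneg _)])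
    have h2 : GI d τ₂ = GI d (‖τ₂‖ • e) :=
      GIAux.GI_radial (by rw [hnorm_smul _ (norm_nonneg _)])
    rw [h1, h2]
    exact GIAux.GI_smul_lt hd he (norm_nonneg _) h
  have hone : ∀ τ : EuclideanSpace ℝ (Fin d), 1 ≤ GI d τ := by
    intro τ
    rcases eq_or_lt_of_le (norm_nonneg τ) with h | h
    · have : τ = 0 := by rwa [eq_comm, norm_eq_zero] at h
      rw [this, GIAux.GI_zero]
    · have := hstrict 0 τ (by simpa using h)
      rw [GIAux.GI_zero] at this
      exact this.le
  refine ⟨GIAux.GI_zero, hone, fun τ₁ τ₂ h => GIAux.GI_radial h, hstrict, ?_⟩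
  intro r hr
  refine ⟨GI d (r • e), ?_, ?_⟩
  · have := hstrict 0 (r • e) (by simpa [hnorm_smul r hr.le] using hr)
    rwa [GIAux.GI_zero] at this
  · intro τ hτ
    rcases eq_or_lt_of_le hτ with h | h
    · exact le_of_eq (GIAux.GI_radial (by rw [hnorm_smul r hr.le, h]))
    · have : ‖r • e‖ < ‖τ‖ := by rwa [hnorm_smul r hr.le]
      exact (hstrict _ _ this).le
end
end

section
/- Let φ : ℝ^d → ℝ be twice continuously differentiable with |∇φ(x)| ≤ C₁ and with the operator norm of the Hessian of φ bounded by C₂ for all x. For h ∈ (0,1] define V_h(x) := α_d^{−1} ∫_{|z|<1} e^{(φ(x) − φ(x+hz))/h} dz. Then e^{−C₁} ≤ V_h(x) ≤ e^{C₁} for all x ∈ ℝ^d and h ∈ (0,1], and there exists C > 0, depending only on d, C₁ and C₂, such that |V_h(x) − G_I(∇φ(x))| ≤ C h for all x ∈ ℝ^d and h ∈ (0,1]. -/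
open MeasureTheory

noncomputable section

/-- `V_h(x) := α_d⁻¹ ∫_{|z|<1} e^{(φ(x) − φ(x+hz))/h} dz`. -/
def Vh (d : ℕ) (φ : EuclideanSpace ℝ (Fin d) → ℝ) (h : ℝ)
    (x : EuclideanSpace ℝ (Fin d)) : ℝ :=
  (unitBallVol d)⁻¹ *
    ∫ z in Metric.ball (0 : EuclideanSpace ℝ (Fin d)) 1,
      Real.exp ((φ x - φ (x + h • z)) / h)

open InnerProductSpace

variable {d : ℕ}

lemma abs_exp_sub_exp_le' {M a b : ℝ} (ha : a ≤ M) (hb : b ≤ M) :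
    |Real.exp a - Real.exp b| ≤ Real.exp M * |a - b| := by
  wlog hab : b ≤ a generalizing a b
  · rw [abs_sub_comm, abs_sub_comm a b]; exact this hb ha (le_of_not_ge hab)
  rw [abs_of_nonneg (sub_nonneg.2 (Real.exp_le_exp.2 hab)),
      abs_of_nonneg (sub_nonneg.2 hab)]
  have h1 : Real.exp a * (1 + (b - a)) ≤ Real.exp b := by
    calc Real.exp a * (1 + (b - a)) ≤ Real.exp a * Real.exp (b - a) := by
          have := Real.add_one_le_exp (b - a)
          nlinarith [Real.exp_pos a]
      _ = Real.exp b := by rw [← Real.exp_add]; ring_nf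
  have h2 : Real.exp a ≤ Real.exp M := Real.exp_le_exp.2 ha
  nlinarith [Real.exp_pos a]

def toDualSymmCLM (d : ℕ) :
    (EuclideanSpace ℝ (Fin d) →L[ℝ] ℝ) →L[ℝ] EuclideanSpace ℝ (Fin d) where
  toFun := (toDual ℝ (EuclideanSpace ℝ (Fin d))).symm
  map_add' := map_add _
  map_smul' := fun c y => by
    have := (toDual ℝ (EuclideanSpace ℝ (Fin d))).symm.map_smul c y
    simpa using this
  cont := (toDual ℝ (EuclideanSpace ℝ (Fin d))).symm.continuous

lemma fderiv_apply_eq_inner (φ : EuclideanSpace ℝ (Fin d) → ℝ) (x v : EuclideanSpace ℝ (Fin d)) :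
    fderiv ℝ φ x v = (inner ℝ (gradient φ x) v : ℝ) := by
  rw [gradient, ← toDual_apply_apply, (toDual ℝ (EuclideanSpace ℝ (Fin d))).apply_symm_apply]

lemma norm_fderiv_eq_norm_gradient (φ : EuclideanSpace ℝ (Fin d) → ℝ)
    (x : EuclideanSpace ℝ (Fin d)) : ‖fderiv ℝ φ x‖ = ‖gradient φ x‖ := by
  rw [gradient]; exact ((toDual ℝ _).symm.norm_map _).symm

lemma phi_lipschitz {φ : EuclideanSpace ℝ (Fin d) → ℝ} (hφ : ContDiff ℝ 2 φ) {C₁ : ℝ}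
    (hg : ∀ x, ‖gradient φ x‖ ≤ C₁) (x y : EuclideanSpace ℝ (Fin d)) :
    |φ y - φ x| ≤ C₁ * ‖y - x‖ := by
  have := Convex.norm_image_sub_le_of_norm_fderiv_le
    (f := φ) (s := Set.univ) (C := C₁)
    (fun u _ => (hφ.differentiable (by norm_num)).differentiableAt)
    (fun u _ => by rw [norm_fderiv_eq_norm_gradient]; exact hg u)
    convex_univ (Set.mem_univ x) (Set.mem_univ y)
  simpa using this

lemma gradient_lipschitz {φ : EuclideanSpace ℝ (Fin d) → ℝ} (hφ : ContDiff ℝ 2 φ) {C₂ : ℝ}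
    (hg : ∀ x, ‖fderiv ℝ (gradient φ) x‖ ≤ C₂) (x y : EuclideanSpace ℝ (Fin d)) :
    ‖gradient φ y - gradient φ x‖ ≤ C₂ * ‖y - x‖ := by
  have hdiff : Differentiable ℝ (gradient φ) := by
    have h1 : ContDiff ℝ 1 (fderiv ℝ φ) := hφ.fderiv_right (by norm_num)
    have : gradient φ = fun u => toDualSymmCLM d (fderiv ℝ φ u) := rfl
    rw [this]
    exact ((toDualSymmCLM d).differentiable).comp (h1.differentiable one_ne_zero)
  have := Convex.norm_image_sub_le_of_norm_fderiv_le
    (f := gradient φ) (s := Set.univ) (C := C₂)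
    (fun u _ => hdiff.differentiableAt) (fun u _ => hg u)
    convex_univ (Set.mem_univ x) (Set.mem_univ y)
  simpa using this

lemma taylor_bound {φ : EuclideanSpace ℝ (Fin d) → ℝ} (hφ : ContDiff ℝ 2 φ) {C₂ : ℝ}
    (hC₂ : 0 ≤ C₂)
    (hg : ∀ x, ‖fderiv ℝ (gradient φ) x‖ ≤ C₂) (x v : EuclideanSpace ℝ (Fin d)) :
    |φ (x + v) - φ x - (inner ℝ (gradient φ x) v : ℝ)| ≤ C₂ * ‖v‖ * ‖v‖ := by
  set L : EuclideanSpace ℝ (Fin d) →L[ℝ] ℝ := fderiv ℝ φ x with hL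
  have hdφ : Differentiable ℝ φ := hφ.differentiable (by norm_num)
  set ψ : EuclideanSpace ℝ (Fin d) → ℝ := fun y => φ y - L y with hψ
  have hdψ : ∀ y, DifferentiableAt ℝ ψ y := fun y =>
    (hdφ y).sub (L.differentiable y)
  have hfψ : ∀ y, fderiv ℝ ψ y = fderiv ℝ φ y - L := by
    intro y
    rw [hψ]
    rw [fderiv_fun_sub (hdφ y) (L.differentiable y)]
    simp [L.fderiv]
  have hbound : ∀ y ∈ Metric.closedBall x ‖v‖, ‖fderiv ℝ ψ y‖ ≤ C₂ * ‖v‖ := by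
    intro y hy
    rw [hfψ y, hL]
    have : ‖fderiv ℝ φ y - fderiv ℝ φ x‖ = ‖gradient φ y - gradient φ x‖ := by
      have e : ∀ u, fderiv ℝ φ u = toDual ℝ (EuclideanSpace ℝ (Fin d)) (gradient φ u) :=
        fun u => ((toDual ℝ _).apply_symm_apply _).symm
      rw [e x, e y, ← map_sub, (toDual ℝ _).norm_map]
    rw [this]
    calc ‖gradient φ y - gradient φ x‖ ≤ C₂ * ‖y - x‖ := gradient_lipschitz hφ hg x y
      _ ≤ C₂ * ‖v‖ := by
          have := Metric.mem_closedBall.1 hy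
          rw [dist_eq_norm] at this
          exact mul_le_mul_of_nonneg_left this hC₂
  have key := Convex.norm_image_sub_le_of_norm_fderiv_le
    (f := ψ) (s := Metric.closedBall x ‖v‖) (C := C₂ * ‖v‖)
    (fun u _ => hdψ u) hbound (convex_closedBall _ _)
    (Metric.mem_closedBall_self (norm_nonneg v))
    (Metric.mem_closedBall.2 (by rw [dist_eq_norm, add_sub_cancel_left]))
  have : ψ (x + v) - ψ x = φ (x + v) - φ x - (inner ℝ (gradient φ x) v : ℝ) := by
    rw [hψ]
    simp only
    rw [← fderiv_apply_eq_inner, ← hL]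
    have : L (x + v) = L x + L v := map_add L x v
    rw [this]; ring
  rw [← this]
  calc |ψ (x + v) - ψ x| ≤ C₂ * ‖v‖ * ‖x + v - x‖ := key
    _ = C₂ * ‖v‖ * ‖v‖ := by rw [add_sub_cancel_left]


/-- For `φ` of class `C²` with `|∇φ| ≤ C₁` and `‖Hess φ‖ ≤ C₂`,
one has `e^{-C₁} ≤ V_h(x) ≤ e^{C₁}`, and `|V_h(x) - G_I(∇φ(x))| ≤ C h` with `C`
depending only on `d`, `C₁`, `C₂`. -/
theorem Vh_bounds_and_GI_approx (d : ℕ) (hd : 1 ≤ d) (C₁ C₂ : ℝ)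
    (hC₁ : 0 < C₁) (hC₂ : 0 < C₂) :
    (∀ φ : EuclideanSpace ℝ (Fin d) → ℝ, ContDiff ℝ 2 φ →
      (∀ x, ‖gradient φ x‖ ≤ C₁) → (∀ x, ‖fderiv ℝ (gradient φ) x‖ ≤ C₂) →
      ∀ h ∈ Set.Ioc (0 : ℝ) 1, ∀ x,
        Real.exp (-C₁) ≤ Vh d φ h x ∧ Vh d φ h x ≤ Real.exp C₁) ∧
    ∃ C > 0, ∀ φ : EuclideanSpace ℝ (Fin d) → ℝ, ContDiff ℝ 2 φ →
      (∀ x, ‖gradient φ x‖ ≤ C₁) → (∀ x, ‖fderiv ℝ (gradient φ) x‖ ≤ C₂) →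
      ∀ h ∈ Set.Ioc (0 : ℝ) 1, ∀ x,
        |Vh d φ h x - GI d (gradient φ x)| ≤ C * h := by
  set E := EuclideanSpace ℝ (Fin d)
  set B : Set E := Metric.ball (0 : E) 1 with hB
  have hBmeas : MeasurableSet B := measurableSet_ball
  have hBfin : volume B < ⊤ := measure_ball_lt_top
  have hα : unitBallVol d = (volume B).toReal := rfl
  have hαpos : 0 < unitBallVol d := by
    rw [hα]
    exact ENNReal.toReal_pos (Metric.measure_ball_pos volume 0 one_pos).ne' hBfin.ne
  -- integrability of a continuous function on B
  have hIntOn : ∀ f : E → ℝ, Continuous f → IntegrableOn f B := by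
    intro f hf
    exact ((hf.continuousOn).integrableOn_compact (isCompact_closedBall (0 : E) 1)).mono_set
      Metric.ball_subset_closedBall
  -- pointwise bound on `a`
  have habs : ∀ (φ : E → ℝ), ContDiff ℝ 2 φ → (∀ x, ‖gradient φ x‖ ≤ C₁) →
      ∀ h ∈ Set.Ioc (0 : ℝ) 1, ∀ (x : E), ∀ z ∈ B, |(φ x - φ (x + h • z)) / h| ≤ C₁ := by
    intro φ hφ hg h hh x z hz
    obtain ⟨hh0, hh1⟩ := hh
    have hz1 : ‖z‖ ≤ 1 := le_of_lt (mem_ball_zero_iff.1 hz)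
    have hlip := phi_lipschitz hφ hg x (x + h • z)
    have hnv : ‖x + h • z - x‖ = h * ‖z‖ := by
      rw [add_sub_cancel_left, norm_smul, Real.norm_eq_abs, abs_of_pos hh0]
    rw [hnv] at hlip
    rw [abs_div, abs_of_pos hh0, div_le_iff₀ hh0, abs_sub_comm]
    calc |φ (x + h • z) - φ x| ≤ C₁ * (h * ‖z‖) := hlip
      _ ≤ C₁ * h := by nlinarith [mul_nonneg (mul_pos hC₁ hh0).le (sub_nonneg.2 hz1)]
  -- continuity of the Vh integrand
  have hcont : ∀ (φ : E → ℝ), ContDiff ℝ 2 φ → ∀ (h : ℝ) (x : E),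
      Continuous fun z : E => Real.exp ((φ x - φ (x + h • z)) / h) := by
    intro φ hφ h x
    have h1 : Continuous fun z : E => x + h • z :=
      continuous_const.add (continuous_id.const_smul h)
    exact ((continuous_const.sub (hφ.continuous.comp h1)).div_const h).rexp
  constructor
  · -- Part 1
    intro φ hφ hg hg2 h hh x
    have hInt := hIntOn _ (hcont φ hφ h x)
    have hconst : ∀ c : ℝ, IntegrableOn (fun _ : E => c) B :=
      fun c => integrableOn_const hBfin.ne
    have hle : ∀ z ∈ B, Real.exp (-C₁) ≤ Real.exp ((φ x - φ (x + h • z)) / h) := by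
      intro z hz
      apply Real.exp_le_exp.2
      have := habs φ hφ hg h hh x z hz
      linarith [neg_abs_le ((φ x - φ (x + h • z)) / h)]
    have hge : ∀ z ∈ B, Real.exp ((φ x - φ (x + h • z)) / h) ≤ Real.exp C₁ := by
      intro z hz
      apply Real.exp_le_exp.2
      have := habs φ hφ hg h hh x z hz
      linarith [le_abs_self ((φ x - φ (x + h • z)) / h)]
    have h1 : ∫ z in B, (Real.exp (-C₁)) ≤ ∫ z in B, Real.exp ((φ x - φ (x + h • z)) / h) :=
      setIntegral_mono_on (hconst _) hInt hBmeas hle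
    have h2 : ∫ z in B, Real.exp ((φ x - φ (x + h • z)) / h) ≤ ∫ z in B, (Real.exp C₁) :=
      setIntegral_mono_on hInt (hconst _) hBmeas hge
    rw [setIntegral_const, smul_eq_mul, measureReal_def, ← hα] at h1
    rw [setIntegral_const, smul_eq_mul, measureReal_def, ← hα] at h2
    unfold Vh
    rw [← hB]
    constructor
    · calc Real.exp (-C₁) = (unitBallVol d)⁻¹ * (unitBallVol d * Real.exp (-C₁)) := by
            field_simp
        _ ≤ _ := by
            apply mul_le_mul_of_nonneg_left h1 (inv_nonneg.2 hαpos.le)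
    · calc (unitBallVol d)⁻¹ * ∫ z in B, Real.exp ((φ x - φ (x + h • z)) / h)
          ≤ (unitBallVol d)⁻¹ * (unitBallVol d * Real.exp C₁) :=
            mul_le_mul_of_nonneg_left h2 (inv_nonneg.2 hαpos.le)
        _ = Real.exp C₁ := by field_simp
  · -- Part 2
    refine ⟨Real.exp C₁ * C₂, by positivity, ?_⟩
    intro φ hφ hg hg2 h hh x
    obtain ⟨hh0, hh1⟩ := hh
    have hInt := hIntOn _ (hcont φ hφ h x)
    have hgcont : Continuous fun z : E => Real.exp (-(inner ℝ z (gradient φ x) : ℝ)) := by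
      have : Continuous fun z : E => (inner ℝ z (gradient φ x) : ℝ) :=
        continuous_id.inner continuous_const
      exact this.neg.rexp
    have hIntg := hIntOn _ hgcont
    -- pointwise bound
    have hptw : ∀ z ∈ B,
        ‖Real.exp ((φ x - φ (x + h • z)) / h) - Real.exp (-(inner ℝ z (gradient φ x) : ℝ))‖
          ≤ Real.exp C₁ * (C₂ * h) := by
      intro z hz
      have hz1 : ‖z‖ ≤ 1 := le_of_lt (mem_ball_zero_iff.1 hz)
      set a := (φ x - φ (x + h • z)) / h with ha
      set b := -(inner ℝ z (gradient φ x) : ℝ) with hb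
      have haC : a ≤ C₁ :=
        le_trans (le_abs_self _) (habs φ hφ hg h ⟨hh0, hh1⟩ x z hz)
      have hbC : b ≤ C₁ := by
        have h1 : |(inner ℝ z (gradient φ x) : ℝ)| ≤ ‖z‖ * ‖gradient φ x‖ :=
          abs_real_inner_le_norm z (gradient φ x)
        have h2 := hg x
        have h3 : ‖z‖ * ‖gradient φ x‖ ≤ C₁ := by nlinarith [norm_nonneg z, norm_nonneg (gradient φ x)]
        rw [hb]
        linarith [neg_abs_le (inner ℝ z (gradient φ x) : ℝ), abs_nonneg (inner ℝ z (gradient φ x) : ℝ)]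
      have htay := taylor_bound hφ hC₂.le hg2 x (h • z)
      have hinner : (inner ℝ (gradient φ x) (h • z) : ℝ) = h * (inner ℝ z (gradient φ x) : ℝ) := by
        rw [real_inner_smul_right, real_inner_comm]
      have hnv : ‖h • z‖ = h * ‖z‖ := by
        rw [norm_smul, Real.norm_eq_abs, abs_of_pos hh0]
      rw [hinner, hnv] at htay
      have hab : |a - b| ≤ C₂ * h := by
        have heq : a - b = -((φ (x + h • z) - φ x - h * (inner ℝ z (gradient φ x) : ℝ)) / h) := by
          rw [ha, hb]; field_simp; ring
        rw [heq, abs_neg, abs_div, abs_of_pos hh0, div_le_iff₀ hh0]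
        calc |φ (x + h • z) - φ x - h * (inner ℝ z (gradient φ x) : ℝ)|
            ≤ C₂ * (h * ‖z‖) * (h * ‖z‖) := htay
          _ ≤ C₂ * h * h := by
              have hz2 : ‖z‖ * ‖z‖ ≤ 1 := by nlinarith [norm_nonneg z]
              nlinarith [mul_nonneg (mul_nonneg hC₂.le (mul_pos hh0 hh0).le) (sub_nonneg.2 hz2)]
      calc ‖Real.exp a - Real.exp b‖ = |Real.exp a - Real.exp b| := rfl
        _ ≤ Real.exp C₁ * |a - b| := abs_exp_sub_exp_le' haC hbC
        _ ≤ Real.exp C₁ * (C₂ * h) := by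
            apply mul_le_mul_of_nonneg_left hab (Real.exp_pos C₁).le
    -- combine
    have hdiff : Vh d φ h x - GI d (gradient φ x)
        = (unitBallVol d)⁻¹ *
          ∫ z in B, (Real.exp ((φ x - φ (x + h • z)) / h)
            - Real.exp (-(inner ℝ z (gradient φ x) : ℝ))) := by
      unfold Vh GI
      rw [← hB, integral_sub hInt hIntg]
      ring
    rw [hdiff, abs_mul, abs_of_nonneg (inv_nonneg.2 hαpos.le)]
    have hbig :
        |∫ z in B, (Real.exp ((φ x - φ (x + h • z)) / h)
            - Real.exp (-(inner ℝ z (gradient φ x) : ℝ)))|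
          ≤ Real.exp C₁ * (C₂ * h) * (volume B).toReal := by
      exact norm_setIntegral_le_of_norm_le_const hBfin hptw
    calc (unitBallVol d)⁻¹ * |∫ z in B, (Real.exp ((φ x - φ (x + h • z)) / h)
            - Real.exp (-(inner ℝ z (gradient φ x) : ℝ)))|
        ≤ (unitBallVol d)⁻¹ * (Real.exp C₁ * (C₂ * h) * unitBallVol d) := by
          rw [hα]
          exact mul_le_mul_of_nonneg_left hbig (inv_nonneg.2 hαpos.le)
      _ = Real.exp C₁ * C₂ * h := by field_simp
end
end

section
/- Let φ : ℝ^d → ℝ be continuous with e^{−φ(x)/h} Lebesgue-integrable, let dμ_h = Z_h e^{−φ(x)/h} dx be the associated probability measure, and define the Markov kernel t_h(x, A) := μ_h(B(x,h))^{−1} μ_h(A ∩ B(x,h)) and the probability measure ν_{h,∞}(A) := Z̃_h ∫_A μ_h(B(y,h)) dμ_h(y), where Z̃_h > 0 normalizes ν_{h,∞} to total mass 1. Then ν_{h,∞} is invariant for t_h: for every Borel set A ⊆ ℝ^d, ∫_{ℝ^d} t_h(x, A) dν_{h,∞}(x) = ν_{h,∞}(A). -/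
open MeasureTheory

/-- The measure `ν_{h,∞}(A) = Z̃_h ∫_A μ_h(B(y,h)) dμ_h(y)` is
invariant for the Markov kernel `t_h(x,A) = μ_h(B(x,h))⁻¹ μ_h(A ∩ B(x,h))`. -/
theorem invariant_measure_random_walk (d : ℕ) (hd : 1 ≤ d)
    (φ : EuclideanSpace ℝ (Fin d) → ℝ) (hφ : Continuous φ)
    (h : ℝ) (hh : h ∈ Set.Ioc (0 : ℝ) 1)
    (hint : Integrable (fun x => Real.exp (-φ x / h))
      (volume : Measure (EuclideanSpace ℝ (Fin d))))
    (Z : ℝ) (hZ : 0 < Z)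
    (μh : Measure (EuclideanSpace ℝ (Fin d)))
    (hμh : μh = (volume : Measure (EuclideanSpace ℝ (Fin d))).withDensity
      fun x => ENNReal.ofReal (Z * Real.exp (-φ x / h)))
    (hμprob : μh Set.univ = 1)
    (Zt : ℝ) (hZt : 0 < Zt)
    (ν : Measure (EuclideanSpace ℝ (Fin d)))
    (hν : ν = μh.withDensity fun y => ENNReal.ofReal Zt * μh (Metric.ball y h))
    (hνprob : ν Set.univ = 1) :
    ∀ A : Set (EuclideanSpace ℝ (Fin d)), MeasurableSet A →
      ∫⁻ x, (μh (Metric.ball x h))⁻¹ * μh (A ∩ Metric.ball x h) ∂ν = ν A := by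
  intro A hA
  have hfin : IsFiniteMeasure μh := ⟨by rw [hμprob]; exact ENNReal.one_lt_top⟩
  -- measurability of x ↦ μh (ball x h) and x ↦ μh (A ∩ ball x h)
  have hsball : MeasurableSet {p : EuclideanSpace ℝ (Fin d) × EuclideanSpace ℝ (Fin d) |
      dist p.2 p.1 < h} :=
    measurableSet_lt (continuous_dist.comp (continuous_snd.prodMk continuous_fst)).measurable
      measurable_const
  have hsA : MeasurableSet {p : EuclideanSpace ℝ (Fin d) × EuclideanSpace ℝ (Fin d) |
      p.2 ∈ A ∧ dist p.2 p.1 < h} := by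
    have heq : {p : EuclideanSpace ℝ (Fin d) × EuclideanSpace ℝ (Fin d) |
        p.2 ∈ A ∧ dist p.2 p.1 < h}
        = Prod.snd ⁻¹' A ∩ {p | dist p.2 p.1 < h} := rfl
    rw [heq]
    exact (measurable_snd hA).inter hsball
  have hmb : Measurable fun x : EuclideanSpace ℝ (Fin d) => μh (Metric.ball x h) := by
    exact measurable_measure_prodMk_left (ν := μh) hsball
  have hmAb : Measurable fun x : EuclideanSpace ℝ (Fin d) => μh (A ∩ Metric.ball x h) := by
    exact measurable_measure_prodMk_left (ν := μh) hsA
  -- positivity and finiteness of μh (ball x h)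
  have hball_ne : ∀ x : EuclideanSpace ℝ (Fin d), μh (Metric.ball x h) ≠ 0 := by
    intro x
    rw [hμh, withDensity_apply _ measurableSet_ball]
    intro h0
    have hfm : Measurable fun y : EuclideanSpace ℝ (Fin d) =>
        ENNReal.ofReal (Z * Real.exp (-φ y / h)) := by fun_prop
    rw [lintegral_eq_zero_iff hfm] at h0
    have hne : ∀ y : EuclideanSpace ℝ (Fin d),
        ENNReal.ofReal (Z * Real.exp (-φ y / h)) ≠ 0 := fun y =>
      (ENNReal.ofReal_pos.mpr (by positivity)).ne'
    have h1 : volume (Metric.ball x h : Set (EuclideanSpace ℝ (Fin d))) = 0 := by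
      have h2 := ae_iff.mp h0
      simpa [hne] using h2
    exact (Metric.measure_ball_pos volume x hh.1).ne' h1
  have hball_top : ∀ x : EuclideanSpace ℝ (Fin d), μh (Metric.ball x h) ≠ ⊤ := fun x =>
    ((measure_mono (Set.subset_univ _)).trans_lt (by rw [hμprob]; exact ENNReal.one_lt_top)).ne
  -- rewrite the ν-integral as a μh-integral
  have hdens : Measurable fun y : EuclideanSpace ℝ (Fin d) =>
      ENNReal.ofReal Zt * μh (Metric.ball y h) :=
    measurable_const.mul hmb
  rw [hν, lintegral_withDensity_eq_lintegral_mul _ hdens (show Measurable fun x : EuclideanSpace ℝ (Fin d) => (μh (Metric.ball x h))⁻¹ * μh (A ∩ Metric.ball x h) from (hmb.inv).mul hmAb)]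
  have hcancel : ∀ x : EuclideanSpace ℝ (Fin d),
      ((fun y => ENNReal.ofReal Zt * μh (Metric.ball y h)) *
        fun x => (μh (Metric.ball x h))⁻¹ * μh (A ∩ Metric.ball x h)) x
      = ENNReal.ofReal Zt * μh (A ∩ Metric.ball x h) := by
    intro x
    simp only [Pi.mul_apply]
    rw [mul_assoc, ← mul_assoc (μh (Metric.ball x h)),
      ENNReal.mul_inv_cancel (hball_ne x) (hball_top x), one_mul]
  simp only [hcancel]
  rw [lintegral_const_mul _ hmAb]
  -- Tonelli
  have key : ∫⁻ x, μh (A ∩ Metric.ball x h) ∂μh = ∫⁻ y in A, μh (Metric.ball y h) ∂μh := by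
    have h1 : ∀ x : EuclideanSpace ℝ (Fin d), μh (A ∩ Metric.ball x h)
        = ∫⁻ y, A.indicator 1 y * (Metric.ball y h).indicator 1 x ∂μh := by
      intro x
      rw [← lintegral_indicator_one (hA.inter measurableSet_ball)]
      refine lintegral_congr fun y => ?_
      have hsym : x ∈ Metric.ball y h ↔ y ∈ Metric.ball x h := by
        simp [Metric.mem_ball, dist_comm]
      by_cases h1 : y ∈ A <;> by_cases h2 : y ∈ Metric.ball x h
      · rw [Set.indicator_of_mem (show y ∈ A ∩ Metric.ball x h from ⟨h1, h2⟩),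
          Set.indicator_of_mem h1, Set.indicator_of_mem (hsym.mpr h2)]; simp
      · rw [Set.indicator_of_notMem (fun hc => h2 hc.2),
          Set.indicator_of_notMem (fun hc : x ∈ Metric.ball y h => h2 (hsym.mp hc))]; simp
      · rw [Set.indicator_of_notMem (fun hc => h1 hc.1), Set.indicator_of_notMem h1]; simp
      · rw [Set.indicator_of_notMem (fun hc => h1 hc.1), Set.indicator_of_notMem h1]; simp
    simp only [h1]
    rw [lintegral_lintegral_swap]
    · have h2 : ∀ y : EuclideanSpace ℝ (Fin d),
          ∫⁻ x, A.indicator 1 y * (Metric.ball y h).indicator 1 x ∂μh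
          = A.indicator 1 y * μh (Metric.ball y h) := by
        intro y
        have hg : Measurable ((Metric.ball y h).indicator
            (1 : EuclideanSpace ℝ (Fin d) → ENNReal)) :=
          measurable_const.indicator measurableSet_ball
        rw [lintegral_const_mul _ hg, lintegral_indicator_one measurableSet_ball]
      simp only [h2]
      have h3 : ∀ y, A.indicator (1 : EuclideanSpace ℝ (Fin d) → ENNReal) y
          * μh (Metric.ball y h)
          = A.indicator (fun y => μh (Metric.ball y h)) y := by
        intro y; by_cases h1 : y ∈ A <;> simp [h1]
      simp only [h3]
      exact lintegral_indicator hA _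
    · have heq : (Function.uncurry fun x y : EuclideanSpace ℝ (Fin d) =>
          A.indicator (1 : EuclideanSpace ℝ (Fin d) → ENNReal) y *
            (Metric.ball y h).indicator 1 x)
          = {p : EuclideanSpace ℝ (Fin d) × EuclideanSpace ℝ (Fin d) |
              p.2 ∈ A ∧ dist p.2 p.1 < h}.indicator 1 := by
        ext p
        obtain ⟨x, y⟩ := p
        show A.indicator 1 y * (Metric.ball y h).indicator 1 x = _
        by_cases h1 : y ∈ A <;> by_cases h2 : x ∈ Metric.ball y h
        · rw [Set.indicator_of_mem h1, Set.indicator_of_mem h2,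
            Set.indicator_of_mem (show (x, y) ∈ {p : EuclideanSpace ℝ (Fin d) × EuclideanSpace ℝ (Fin d) | p.2 ∈ A ∧ dist p.2 p.1 < h} from
              ⟨h1, by rw [dist_comm]; exact Metric.mem_ball.mp h2⟩)]
          simp
        · rw [Set.indicator_of_notMem h2,
            Set.indicator_of_notMem (fun hc : (x, y) ∈ {p : EuclideanSpace ℝ (Fin d) × EuclideanSpace ℝ (Fin d) | p.2 ∈ A ∧ dist p.2 p.1 < h} =>
              h2 (Metric.mem_ball.mpr (by rw [dist_comm]; exact hc.2)))]
          simp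
        · rw [Set.indicator_of_notMem h1,
            Set.indicator_of_notMem (fun hc : (x, y) ∈ {p : EuclideanSpace ℝ (Fin d) × EuclideanSpace ℝ (Fin d) | p.2 ∈ A ∧ dist p.2 p.1 < h} => h1 hc.1)]
          simp
        · rw [Set.indicator_of_notMem h1,
            Set.indicator_of_notMem (fun hc : (x, y) ∈ {p : EuclideanSpace ℝ (Fin d) × EuclideanSpace ℝ (Fin d) | p.2 ∈ A ∧ dist p.2 p.1 < h} => h1 hc.1)]
          simp
      rw [heq]
      exact (measurable_const.indicator hsA).aemeasurable
  rw [key, withDensity_apply _ hA, ← lintegral_const_mul _ hmb]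
end

section
/- Let d ≥ 1 and let α : {1,…,d}³ → ℂ (written α_{j,k}^n). Suppose that for every η ∈ ℂ^d one has Σ_{j,k,n=1}^d α_{j,k}^n η_j · conj(η_k) · conj(η_n) = 0. Then α_{j,k}^n + α_{j,n}^k = 0 for all j, k, n ∈ {1,…,d}; in particular α_{j,k}^k = 0 for all j, k. -/
/-- If the trilinear expression
`Σ_{j,k,n} α_{j,k}^n η_j conj(η_k) conj(η_n)` vanishes for every `η ∈ ℂ^d`, then the
coefficients satisfy the antisymmetry relation `α_{j,k}^n + α_{j,n}^k = 0`; in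
particular `α_{j,k}^k = 0`. -/
theorem cubic_coefficient_antisymmetry
    (d : ℕ) (hd : 1 ≤ d) (α : Fin d → Fin d → Fin d → ℂ)
    (hα : ∀ η : Fin d → ℂ,
      (∑ j : Fin d, ∑ k : Fin d, ∑ n : Fin d,
        α j k n * η j * (starRingEnd ℂ) (η k) * (starRingEnd ℂ) (η n)) = 0) :
    (∀ j k n : Fin d, α j k n + α j n k = 0) ∧ (∀ j k : Fin d, α j k k = 0) := by
  -- Expansion of the hypothesis at `η + t • ζ` as a "polynomial" in `t` and `conj t`.
  have key : ∀ (ζ η : Fin d → ℂ) (t : ℂ),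
      (∑ j : Fin d, ∑ k : Fin d, ∑ n : Fin d,
        α j k n * η j * (starRingEnd ℂ) (η k) * (starRingEnd ℂ) (η n))
      + t * (∑ j : Fin d, ∑ k : Fin d, ∑ n : Fin d,
        α j k n * ζ j * (starRingEnd ℂ) (η k) * (starRingEnd ℂ) (η n))
      + (starRingEnd ℂ) t * (∑ j : Fin d, ∑ k : Fin d, ∑ n : Fin d,
          α j k n * η j * ((starRingEnd ℂ) (ζ k) * (starRingEnd ℂ) (η n)
            + (starRingEnd ℂ) (η k) * (starRingEnd ℂ) (ζ n)))
      + (t * (starRingEnd ℂ) t) * (∑ j : Fin d, ∑ k : Fin d, ∑ n : Fin d,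
          α j k n * ζ j * ((starRingEnd ℂ) (ζ k) * (starRingEnd ℂ) (η n)
            + (starRingEnd ℂ) (η k) * (starRingEnd ℂ) (ζ n)))
      + ((starRingEnd ℂ) t * (starRingEnd ℂ) t) * (∑ j : Fin d, ∑ k : Fin d, ∑ n : Fin d,
          α j k n * η j * (starRingEnd ℂ) (ζ k) * (starRingEnd ℂ) (ζ n))
      + (t * ((starRingEnd ℂ) t * (starRingEnd ℂ) t)) * (∑ j : Fin d, ∑ k : Fin d, ∑ n : Fin d,
          α j k n * ζ j * (starRingEnd ℂ) (ζ k) * (starRingEnd ℂ) (ζ n)) = 0 := by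
    intro ζ η t
    have h := hα (fun m => η m + t * ζ m)
    simp only [map_add, map_mul] at h
    rw [← h]
    simp only [Finset.mul_sum]
    simp only [← Finset.sum_add_distrib]
    refine Finset.sum_congr rfl fun j _ => Finset.sum_congr rfl fun k _ =>
      Finset.sum_congr rfl fun n _ => by ring
  -- The purely "holomorphic in ζ" part vanishes: Σ α ζ_j conj(η_k) conj(η_n) = 0.
  have stepA : ∀ (ζ η : Fin d → ℂ),
      (∑ j : Fin d, ∑ k : Fin d, ∑ n : Fin d,
        α j k n * ζ j * (starRingEnd ℂ) (η k) * (starRingEnd ℂ) (η n)) = 0 := by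
    intro ζ η
    have e1 := key ζ η 1
    have e2 := key ζ η (-1)
    have e3 := key ζ η Complex.I
    have e4 := key ζ η (-Complex.I)
    simp only [map_one, map_neg, Complex.conj_I, neg_neg] at e1 e2 e3 e4
    have hXY :
        (∑ j : Fin d, ∑ k : Fin d, ∑ n : Fin d,
          α j k n * ζ j * (starRingEnd ℂ) (η k) * (starRingEnd ℂ) (η n))
        + (∑ j : Fin d, ∑ k : Fin d, ∑ n : Fin d,
          α j k n * η j * ((starRingEnd ℂ) (ζ k) * (starRingEnd ℂ) (η n)
            + (starRingEnd ℂ) (η k) * (starRingEnd ℂ) (ζ n))) = 0 := by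
      linear_combination (e1 - e2)/2 - hα ζ
    have hI : Complex.I *
        ((∑ j : Fin d, ∑ k : Fin d, ∑ n : Fin d,
          α j k n * ζ j * (starRingEnd ℂ) (η k) * (starRingEnd ℂ) (η n))
        - (∑ j : Fin d, ∑ k : Fin d, ∑ n : Fin d,
          α j k n * η j * ((starRingEnd ℂ) (ζ k) * (starRingEnd ℂ) (η n)
            + (starRingEnd ℂ) (η k) * (starRingEnd ℂ) (ζ n)))) = 0 := by
      linear_combination (e3 - e4)/2 - Complex.I^3 * hα ζ
    have hXmY := (mul_eq_zero.mp hI).resolve_left Complex.I_ne_zero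
    linear_combination (hXY + hXmY)/2
  have rearr : ∀ (ζ η : Fin d → ℂ),
      (∑ j : Fin d, ∑ k : Fin d, ∑ n : Fin d,
        α j k n * ζ j * (starRingEnd ℂ) (η k) * (starRingEnd ℂ) (η n))
      = ∑ j : Fin d, ζ j * ∑ k : Fin d, ∑ n : Fin d,
          α j k n * (starRingEnd ℂ) (η k) * (starRingEnd ℂ) (η n) := by
    intro ζ η
    refine Finset.sum_congr rfl fun j _ => ?_
    rw [Finset.mul_sum]
    refine Finset.sum_congr rfl fun k _ => ?_
    rw [Finset.mul_sum]
    exact Finset.sum_congr rfl fun n _ => by ring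
  -- For each fixed j, the quadratic form in conj(η) vanishes.
  have stepB : ∀ (j : Fin d) (η : Fin d → ℂ),
      (∑ k : Fin d, ∑ n : Fin d,
        α j k n * (starRingEnd ℂ) (η k) * (starRingEnd ℂ) (η n)) = 0 := by
    intro j η
    have h := stepA (fun m => if m = j then 1 else 0) η
    rw [rearr] at h
    simpa [ite_mul, one_mul, zero_mul, Finset.sum_ite_eq'] using h
  -- Since conjugation is surjective, the honest quadratic form vanishes.
  have stepB' : ∀ (j : Fin d) (x : Fin d → ℂ),
      (∑ k : Fin d, ∑ n : Fin d, α j k n * x k * x n) = 0 := by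
    intro j x
    have h := stepB j (fun m => (starRingEnd ℂ) (x m))
    simpa [Complex.conj_conj] using h
  have P2 : ∀ j k : Fin d, α j k k = 0 := by
    intro j k
    have h := stepB' j (fun m => if m = k then 1 else 0)
    simpa [ite_mul, mul_ite, one_mul, zero_mul, mul_zero, mul_one,
      Finset.sum_ite_eq'] using h
  refine ⟨?_, P2⟩
  intro j k n
  have h := stepB' j (fun m => (if m = k then 1 else 0) + (if m = n then 1 else 0))
  simp only [mul_add, add_mul, ite_mul, mul_ite, one_mul, zero_mul, mul_zero, mul_one,
    Finset.sum_add_distrib, Finset.sum_ite_eq', Finset.mem_univ, if_true] at h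
  linear_combination h - P2 j k - P2 j n
end
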